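/- Let D be a ZX-diagram. If w₁ and w₂ are Pauli semiwebs of D, then their product w₁·w₂ is a Pauli semiweb of D. -/

import Mathlib

/-- The four Pauli labels. -/
inductive Pauli | I | X | Y | Z
  deriving DecidableEq

instance instFintypePauli : Fintype Pauli where
  elems := {Pauli.I, Pauli.X, Pauli.Y, Pauli.Z}
  complete := fun x => by cases x <;> simp

/-- The Pauli matrices as 2×2 complex matrices. -/
def Pauli.mat : Pauli → Matrix (Fin 2) (Fin 2) ℂ
  | Pauli.I => 1
  | Pauli.X => !![0, 1; 1, 0]
  | Pauli.Y => !![0, -Complex.I; Complex.I, 0]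
  | Pauli.Z => !![1, 0; 0, -1]

/-- A wire labelled `p` has X-support if `p ∈ {X, Y}`. -/
def Pauli.hasX : Pauli → Bool
  | Pauli.X => true | Pauli.Y => true | _ => false

/-- A wire labelled `p` has Z-support if `p ∈ {Y, Z}`. -/
def Pauli.hasZ : Pauli → Bool
  | Pauli.Y => true | Pauli.Z => true | _ => false

/-- Node types of a ZX-diagram: Z-spider, X-spider, or H-gate. -/
inductive NodeType | Z | X | H
  deriving DecidableEq

/-- A ZX-diagram: nodes, wires, adjacency (each wire meets at most two nodes),
types, phases, and input/output wires.  Nodes of type `H` have exactly two wires. -/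
structure ZXDiagram (Node Wire : Type) [Fintype Node] [DecidableEq Node]
    [Fintype Wire] [DecidableEq Wire] where
  adj : Node → Wire → Bool
  typ : Node → NodeType
  phase : Node → ℝ
  inputs : Finset Wire
  outputs : Finset Wire
  wire_max_two : ∀ w : Wire, (Finset.univ.filter fun n => adj n w = true).card ≤ 2
  h_deg_two : ∀ n : Node, typ n = NodeType.H →
    (Finset.univ.filter fun w => adj n w = true).card = 2

variable {Node Wire : Type} [Fintype Node] [DecidableEq Node] [Fintype Wire] [DecidableEq Wire]

/-- Spiders are the nodes of type Z or X. -/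
def ZXDiagram.IsSpiderNode (D : ZXDiagram Node Wire) (ν : Node) : Prop :=
  D.typ ν ≠ NodeType.H

/-- Support of the same type as a spider: Z-support for Z-spiders, X-support for X-spiders. -/
def sameSupp : NodeType → Pauli → Bool
  | NodeType.Z, p => p.hasZ
  | NodeType.X, p => p.hasX
  | NodeType.H, _ => false

/-- Support of the opposite type: X-support for Z-spiders, Z-support for X-spiders. -/
def oppSupp : NodeType → Pauli → Bool
  | NodeType.Z, p => p.hasX
  | NodeType.X, p => p.hasZ
  | NodeType.H, _ => false

/-- The H condition for a Pauli labelling. -/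
def HCond (D : ZXDiagram Node Wire) (w : Wire → Pauli) : Prop :=
  ∀ ν j₁ j₂, D.typ ν = NodeType.H → D.adj ν j₁ = true → D.adj ν j₂ = true → j₁ ≠ j₂ →
    (((w j₁).hasX = true) ↔ ((w j₂).hasZ = true)) ∧
    (((w j₁).hasZ = true) ↔ ((w j₂).hasX = true))

/-- The all-or-nothing condition for a Pauli labelling. -/
def AllOrNothing (D : ZXDiagram Node Wire) (w : Wire → Pauli) : Prop :=
  ∀ ν, D.IsSpiderNode ν →
    (∀ j, D.adj ν j = true → oppSupp (D.typ ν) (w j) = true) ∨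
    (∀ j, D.adj ν j = true → oppSupp (D.typ ν) (w j) = false)

/-- A Pauli semiweb is a Pauli labelling satisfying the H and all-or-nothing conditions. -/
def IsSemiweb (D : ZXDiagram Node Wire) (w : Wire → Pauli) : Prop :=
  HCond D w ∧ AllOrNothing D w

/-- The number of wires adjacent to `ν` with support of the same type as `ν`. -/
def sameCount (D : ZXDiagram Node Wire) (w : Wire → Pauli) (ν : Node) : ℕ :=
  (Finset.univ.filter fun j => D.adj ν j = true ∧ sameSupp (D.typ ν) (w j) = true).card

/-- Some wire adjacent to `ν` has support of the opposite type. -/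
def HasOpp (D : ZXDiagram Node Wire) (w : Wire → Pauli) (ν : Node) : Prop :=
  ∃ j, D.adj ν j = true ∧ oppSupp (D.typ ν) (w j) = true

/-- `x` is an odd integer multiple of `π/2`. -/
def IsOddMulHalfPi (x : ℝ) : Prop := ∃ k : ℤ, x = (2 * k + 1) * (Real.pi / 2)

/-- `x` is an integer multiple of `π/2`. -/
def IsMulHalfPi (x : ℝ) : Prop := ∃ k : ℤ, x = k * (Real.pi / 2)

/-- The parity condition at a spider `ν`. -/
def ParityAt (D : ZXDiagram Node Wire) (w : Wire → Pauli) (ν : Node) : Prop :=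
  (¬ IsOddMulHalfPi (D.phase ν) → Even (sameCount D w ν)) ∧
  (IsOddMulHalfPi (D.phase ν) → (Even (sameCount D w ν) ↔ ¬ HasOpp D w ν))

/-- Multiplication in the Pauli group, ignoring phases (X-support and Z-support are
each XORed). -/
def Pauli.mul : Pauli → Pauli → Pauli
  | Pauli.I, p => p
  | p, Pauli.I => p
  | Pauli.X, Pauli.X => Pauli.I
  | Pauli.X, Pauli.Y => Pauli.Z
  | Pauli.X, Pauli.Z => Pauli.Y
  | Pauli.Y, Pauli.X => Pauli.Z
  | Pauli.Y, Pauli.Y => Pauli.I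
  | Pauli.Y, Pauli.Z => Pauli.X
  | Pauli.Z, Pauli.X => Pauli.Y
  | Pauli.Z, Pauli.Y => Pauli.X
  | Pauli.Z, Pauli.Z => Pauli.I

lemma Pauli.hasX_mul (p q : Pauli) : (p.mul q).hasX = xor p.hasX q.hasX := by
  cases p <;> cases q <;> rfl

lemma Pauli.hasZ_mul (p q : Pauli) : (p.mul q).hasZ = xor p.hasZ q.hasZ := by
  cases p <;> cases q <;> rfl

lemma oppSupp_mul (t : NodeType) (p q : Pauli) :
    oppSupp t (p.mul q) = xor (oppSupp t p) (oppSupp t q) := by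
  cases t <;> cases p <;> cases q <;> rfl

/-- The product of two Pauli semiwebs is a Pauli semiweb. -/
theorem isSemiweb_mul {Node Wire : Type} [Fintype Node] [DecidableEq Node]
    [Fintype Wire] [DecidableEq Wire] (D : ZXDiagram Node Wire) (w₁ w₂ : Wire → Pauli)
    (h₁ : IsSemiweb D w₁) (h₂ : IsSemiweb D w₂) :
    IsSemiweb D (fun j => (w₁ j).mul (w₂ j)) := by
  obtain ⟨hH₁, hA₁⟩ := h₁
  obtain ⟨hH₂, hA₂⟩ := h₂
  constructor
  · intro ν j₁ j₂ ht ha₁ ha₂ hne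
    obtain ⟨e1, e2⟩ := hH₁ ν j₁ j₂ ht ha₁ ha₂ hne
    obtain ⟨f1, f2⟩ := hH₂ ν j₁ j₂ ht ha₁ ha₂ hne
    cases h1 : w₁ j₁ <;> cases h2 : w₁ j₂ <;> cases h3 : w₂ j₁ <;> cases h4 : w₂ j₂ <;>
      simp_all [Pauli.hasX, Pauli.hasZ, Pauli.mul]
  · intro ν hs
    rcases hA₁ ν hs with h1 | h1 <;> rcases hA₂ ν hs with h2 | h2
    · right; intro j hj; rw [oppSupp_mul, h1 j hj, h2 j hj]; rfl
    · left; intro j hj; rw [oppSupp_mul, h1 j hj, h2 j hj]; rfl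
    · left; intro j hj; rw [oppSupp_mul, h1 j hj, h2 j hj]; rfl
    · right; intro j hj; rw [oppSupp_mul, h1 j hj, h2 j hj]; rfl
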